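/- A symmetric n×n matrix B lies in COP^n (respectively in interior(COP^n)) if and only if every principal (n−1)×(n−1) submatrix of B obtained by deleting one row and the corresponding column lies in COP^{n−1} (respectively interior(COP^{n−1})) and the value v = max_{x ∈ Δ} min_{y ∈ Δ} x^T B y of the two-player matrix game with payoff matrix B is nonnegative (respectively strictly positive), where Δ is the standard simplex in ℝ^n. -/

import Mathlib

open Matrix Finset

/-- The standard simplex in `ℝⁿ`. -/
def stdSimplex' (n : ℕ) : Set (Fin n → ℝ) :=
  {x | (∀ i, 0 ≤ x i) ∧ ∑ i, x i = 1}

/-- Copositivity. -/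
def copositive {n : ℕ} (B : Matrix (Fin n) (Fin n) ℝ) : Prop :=
  ∀ x : Fin n → ℝ, (∀ i, 0 ≤ x i) → 0 ≤ x ⬝ᵥ B.mulVec x

/-- Strict copositivity (membership in the interior of the copositive cone). -/
def strictCopositive {n : ℕ} (B : Matrix (Fin n) (Fin n) ℝ) : Prop :=
  ∀ x : Fin n → ℝ, (∀ i, 0 ≤ x i) → x ≠ 0 → 0 < x ⬝ᵥ B.mulVec x

/-- The value `max_{x ∈ Δ} min_{y ∈ Δ} xᵀ B y` of the two-player game with payoff `B`. -/
noncomputable def gameValue {n : ℕ} (B : Matrix (Fin n) (Fin n) ℝ) : ℝ :=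
  sSup {t : ℝ | ∃ x ∈ stdSimplex' n,
    t = sInf {s : ℝ | ∃ y ∈ stdSimplex' n, s = x ⬝ᵥ B.mulVec y}}

/-- The principal submatrix of `B` obtained by deleting row and column `k`. -/
def deleteRC {n : ℕ} (B : Matrix (Fin (n + 1)) (Fin (n + 1)) ℝ) (k : Fin (n + 1)) :
    Matrix (Fin n) (Fin n) ℝ :=
  B.submatrix k.succAbove k.succAbove

variable {m : ℕ}

lemma gaddumAux_single_mem (j : Fin (m+1)) : Pi.single j (1:ℝ) ∈ stdSimplex' (m+1) := by
  refine ⟨fun i => ?_, by simp [Finset.sum_pi_single']⟩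
  rcases eq_or_ne i j with rfl | h
  · simp
  · simp [Pi.single_eq_of_ne h]

lemma gaddumAux_inf_dot_le {v y : Fin (m+1) → ℝ} (hy : y ∈ stdSimplex' (m+1)) :
    Finset.univ.inf' Finset.univ_nonempty v ≤ v ⬝ᵥ y := by
  have : (Finset.univ.inf' Finset.univ_nonempty v) * 1 ≤ ∑ j, v j * y j := by
    rw [← hy.2, Finset.mul_sum]
    exact Finset.sum_le_sum fun j _ =>
      mul_le_mul_of_nonneg_right (Finset.inf'_le _ (Finset.mem_univ j)) (hy.1 j)
  simpa [dotProduct] using this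

lemma gaddumAux_sInf_eq (B : Matrix (Fin (m+1)) (Fin (m+1)) ℝ) (x : Fin (m+1) → ℝ) :
    sInf {s : ℝ | ∃ y ∈ stdSimplex' (m+1), s = x ⬝ᵥ B.mulVec y} =
      Finset.univ.inf' Finset.univ_nonempty (x ᵥ* B) := by
  have hX : ∀ y : Fin (m+1) → ℝ, x ⬝ᵥ B *ᵥ y = (x ᵥ* B) ⬝ᵥ y := fun y =>
    Matrix.dotProduct_mulVec x B y
  apply le_antisymm
  · apply csInf_le
    · exact ⟨_, fun s ⟨y, hy, hs⟩ => by rw [hs, hX]; exact gaddumAux_inf_dot_le hy⟩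
    · obtain ⟨j, -, hj⟩ := Finset.exists_mem_eq_inf' (Finset.univ_nonempty) (x ᵥ* B)
      exact ⟨Pi.single j 1, gaddumAux_single_mem j, by rw [hX, dotProduct_single, hj, mul_one]⟩
  · exact le_csInf ⟨_, Pi.single 0 1, gaddumAux_single_mem 0, rfl⟩
      (fun s ⟨y, hy, hs⟩ => by rw [hs, hX]; exact gaddumAux_inf_dot_le hy)

lemma gaddumAux_le_gameValue (B : Matrix (Fin (m+1)) (Fin (m+1)) ℝ) {x : Fin (m+1) → ℝ}
    (hx : x ∈ stdSimplex' (m+1)) :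
    Finset.univ.inf' Finset.univ_nonempty (x ᵥ* B) ≤ gameValue B := by
  apply le_csSup
  · refine ⟨Finset.univ.sup' Finset.univ_nonempty (fun i => B i 0), ?_⟩
    rintro t ⟨z, hz, ht⟩
    rw [ht, gaddumAux_sInf_eq]
    refine le_trans (Finset.inf'_le _ (Finset.mem_univ 0)) ?_
    have : ∑ i, z i * B i 0 ≤ ∑ i, z i * Finset.univ.sup' Finset.univ_nonempty (fun i => B i 0) := by
      refine Finset.sum_le_sum fun i _ =>
        mul_le_mul_of_nonneg_left (Finset.le_sup' (fun i => B i 0) (Finset.mem_univ i)) (hz.1 i)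
    calc (z ᵥ* B) 0 = ∑ i, z i * B i 0 := by simp [Matrix.vecMul, dotProduct]
      _ ≤ _ := this
      _ = _ := by rw [← Finset.sum_mul, hz.2, one_mul]
  · exact ⟨x, hx, (gaddumAux_sInf_eq B x).symm⟩

lemma gaddumAux_gameValue_le (B : Matrix (Fin (m+1)) (Fin (m+1)) ℝ) {a : ℝ}
    (h : ∀ x ∈ stdSimplex' (m+1), Finset.univ.inf' Finset.univ_nonempty (x ᵥ* B) ≤ a) :
    gameValue B ≤ a := by
  have hne : {t : ℝ | ∃ x ∈ stdSimplex' (m+1),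
      t = sInf {s : ℝ | ∃ y ∈ stdSimplex' (m+1), s = x ⬝ᵥ B.mulVec y}}.Nonempty :=
    ⟨_, ⟨Pi.single 0 1, gaddumAux_single_mem 0, rfl⟩⟩
  apply csSup_le hne
  rintro t ⟨x, hx, ht⟩
  rw [ht, gaddumAux_sInf_eq]
  exact h x hx

lemma gaddumAux_quad_expand {B : Matrix (Fin m) (Fin m) ℝ} (hB : B.IsSymm) (x v : Fin m → ℝ) (t : ℝ) :
    (x + t • v) ⬝ᵥ B *ᵥ (x + t • v) =
      x ⬝ᵥ B *ᵥ x + 2*t*(v ⬝ᵥ B *ᵥ x) + t^2 * (v ⬝ᵥ B *ᵥ v) := by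
  have hswap : x ⬝ᵥ B *ᵥ v = v ⬝ᵥ B *ᵥ x := by
    rw [Matrix.dotProduct_mulVec, ← Matrix.mulVec_transpose, hB.eq, dotProduct_comm]
  simp only [Matrix.mulVec_add, Matrix.mulVec_smul, dotProduct_add,
    add_dotProduct, dotProduct_smul, smul_dotProduct, smul_eq_mul, hswap]
  ring

lemma gaddumAux_kkt {B : Matrix (Fin (m+1)) (Fin (m+1)) ℝ} (hB : B.IsSymm) {x : Fin (m+1) → ℝ}
    (hx : x ∈ stdSimplex' (m+1))
    (hmin : ∀ y ∈ stdSimplex' (m+1), x ⬝ᵥ B *ᵥ x ≤ y ⬝ᵥ B *ᵥ y)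
    {i : Fin (m+1)} (hi : 0 < x i) (j : Fin (m+1)) :
    (B *ᵥ x) i ≤ (B *ᵥ x) j := by
  by_contra hlt
  push_neg at hlt
  have hij : i ≠ j := by rintro rfl; exact absurd rfl (ne_of_gt hlt)
  set v : Fin (m+1) → ℝ := Pi.single j 1 - Pi.single i 1 with hv
  set ε : ℝ := (B *ᵥ x) i - (B *ᵥ x) j with hε
  have hεpos : 0 < ε := by simp [hε]; linarith
  set d : ℝ := v ⬝ᵥ B *ᵥ v with hd
  set t : ℝ := min (x i) (ε / (|d| + 1)) with ht
  have habs : (0:ℝ) ≤ |d| := abs_nonneg d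
  have htpos : 0 < t := lt_min hi (div_pos hεpos (by linarith))
  have htle : t ≤ x i := min_le_left _ _
  have htd : t * (|d| + 1) ≤ ε := by
    rw [← le_div_iff₀ (by linarith)]
    exact min_le_right _ _
  have hvdot : v ⬝ᵥ B *ᵥ x = -ε := by
    simp [hv, hε, sub_dotProduct, single_dotProduct]
  have hymem : x + t • v ∈ stdSimplex' (m+1) := by
    constructor
    · intro k
      rcases eq_or_ne k i with rfl | hk
      · simp [hv, Pi.single_eq_of_ne hij]
        linarith
      · have h1 : (0:ℝ) ≤ (Pi.single j 1 : Fin (m+1) → ℝ) k := by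
          rcases eq_or_ne k j with rfl | h
          · simp
          · simp [Pi.single_eq_of_ne h]
        have := hx.1 k
        simp [hv, Pi.single_eq_of_ne hk]
        nlinarith
    · simp [hv, Finset.sum_add_distrib, ← Finset.mul_sum, Finset.sum_sub_distrib,
        Finset.sum_pi_single', hx.2]
  have hq := hmin _ hymem
  rw [gaddumAux_quad_expand hB x v t, hvdot] at hq
  have hdle : d ≤ |d| := le_abs_self d
  nlinarith

lemma gaddumAux_exists_pos {x : Fin m → ℝ} (hx : x ∈ stdSimplex' m) : ∃ i, 0 < x i := by
  by_contra h
  push_neg at h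
  have : ∑ i, x i ≤ 0 := Finset.sum_nonpos (fun i _ => h i)
  rw [hx.2] at this; linarith

lemma gaddumAux_min_lemma {B : Matrix (Fin (m+1)) (Fin (m+1)) ℝ} (hB : B.IsSymm) {x : Fin (m+1) → ℝ}
    (hx : x ∈ stdSimplex' (m+1))
    (hmin : ∀ y ∈ stdSimplex' (m+1), x ⬝ᵥ B *ᵥ x ≤ y ⬝ᵥ B *ᵥ y) :
    (∀ j, x ⬝ᵥ B *ᵥ x ≤ (B *ᵥ x) j) ∧ (∀ i, 0 < x i → (B *ᵥ x) i = x ⬝ᵥ B *ᵥ x) := by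
  obtain ⟨i0, hi0⟩ := gaddumAux_exists_pos hx
  have hle : ∀ j, (B *ᵥ x) i0 ≤ (B *ᵥ x) j := gaddumAux_kkt hB hx hmin hi0
  have hqe : x ⬝ᵥ B *ᵥ x = (B *ᵥ x) i0 := by
    have h1 : x ⬝ᵥ B *ᵥ x = ∑ i, x i * (B *ᵥ x) i := rfl
    have h2 : ∑ i, x i * (B *ᵥ x) i0 = (B *ᵥ x) i0 := by
      rw [← Finset.sum_mul, hx.2, one_mul]
    apply le_antisymm
    · rw [h1, ← h2]
      refine Finset.sum_le_sum fun i _ => ?_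
      rcases (hx.1 i).eq_or_lt with h | h
      · rw [← h]; simp
      · exact mul_le_mul_of_nonneg_left (gaddumAux_kkt hB hx hmin h i0) (hx.1 i)
    · rw [h1, ← h2]
      exact Finset.sum_le_sum fun i _ => mul_le_mul_of_nonneg_left (hle i) (hx.1 i)
  refine ⟨fun j => hqe ▸ hle j, fun i hi => ?_⟩
  rw [hqe]
  exact le_antisymm (gaddumAux_kkt hB hx hmin hi i0) (hle i)

/-- Extension of a vector by a zero in position `k`. -/
def gaddumAux_extZ {m : ℕ} (k : Fin (m+1)) (z : Fin m → ℝ) : Fin (m+1) → ℝ :=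
  k.insertNth 0 z

@[simp] lemma gaddumAux_extZ_same (k : Fin (m+1)) (z : Fin m → ℝ) : gaddumAux_extZ k z k = 0 := by
  simp [gaddumAux_extZ]

@[simp] lemma gaddumAux_extZ_succAbove (k : Fin (m+1)) (z : Fin m → ℝ) (j : Fin m) :
    gaddumAux_extZ k z (k.succAbove j) = z j := by
  simp [gaddumAux_extZ]

lemma gaddumAux_ext_dot (B : Matrix (Fin (m+1)) (Fin (m+1)) ℝ) (k : Fin (m+1)) (z : Fin m → ℝ) :
    (gaddumAux_extZ k z) ⬝ᵥ B *ᵥ (gaddumAux_extZ k z) = z ⬝ᵥ (deleteRC B k) *ᵥ z := by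
  have hmv : ∀ i, (B *ᵥ gaddumAux_extZ k z) i = ∑ j, B i (k.succAbove j) * z j := by
    intro i
    show ∑ j, B i j * (gaddumAux_extZ k z) j = _
    rw [Fin.sum_univ_succAbove _ k]
    simp
  show ∑ i, (gaddumAux_extZ k z) i * (B *ᵥ gaddumAux_extZ k z) i = _
  rw [Fin.sum_univ_succAbove _ k]
  simp only [gaddumAux_extZ_same, gaddumAux_extZ_succAbove, zero_mul, zero_add, hmv]
  rfl

lemma gaddumAux_extZ_nonneg {k : Fin (m+1)} {z : Fin m → ℝ} (hz : ∀ i, 0 ≤ z i) :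
    ∀ i, 0 ≤ gaddumAux_extZ k z i := by
  intro i
  rcases eq_or_ne i k with rfl | h
  · simp
  · obtain ⟨j, rfl⟩ := Fin.exists_succAbove_eq h
    rw [gaddumAux_extZ_succAbove]
    exact hz j

lemma gaddumAux_extZ_ne_zero {k : Fin (m+1)} {z : Fin m → ℝ} (hz : z ≠ 0) :
    gaddumAux_extZ k z ≠ 0 := by
  obtain ⟨j, hj⟩ := Function.ne_iff.mp hz
  intro h
  apply hj
  have := congrFun h (k.succAbove j)
  rwa [gaddumAux_extZ_succAbove] at this

lemma gaddumAux_eq_extZ {k : Fin (m+1)} {x : Fin (m+1) → ℝ} (hk : x k = 0) :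
    x = gaddumAux_extZ k (fun j => x (k.succAbove j)) := by
  funext i
  rcases eq_or_ne i k with rfl | h
  · rw [gaddumAux_extZ_same, hk]
  · obtain ⟨j, rfl⟩ := Fin.exists_succAbove_eq h
    rw [gaddumAux_extZ_succAbove]

lemma gaddumAux_exists_minimizer (B : Matrix (Fin (m+1)) (Fin (m+1)) ℝ) :
    ∃ x ∈ stdSimplex' (m+1), ∀ y ∈ stdSimplex' (m+1), x ⬝ᵥ B *ᵥ x ≤ y ⬝ᵥ B *ᵥ y := by
  have hc : IsCompact (stdSimplex' (m+1)) := isCompact_stdSimplex ℝ (Fin (m+1))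
  have hcont : Continuous (fun x : Fin (m+1) → ℝ => x ⬝ᵥ B *ᵥ x) := by
    simp only [dotProduct, Matrix.mulVec]
    fun_prop
  obtain ⟨x, hx, hmin⟩ := hc.exists_isMinOn ⟨Pi.single 0 1, gaddumAux_single_mem 0⟩ hcont.continuousOn
  exact ⟨x, hx, fun y hy => hmin hy⟩

lemma gaddumAux_scale_aux {B : Matrix (Fin m) (Fin m) ℝ} {x : Fin m → ℝ} (hx : ∀ i, 0 ≤ x i)
    (hs : 0 < ∑ i, x i) :
    ((∑ i, x i)⁻¹ • x) ∈ stdSimplex' m ∧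
      x ⬝ᵥ B *ᵥ x = (∑ i, x i)^2 * (((∑ i, x i)⁻¹ • x) ⬝ᵥ B *ᵥ ((∑ i, x i)⁻¹ • x)) := by
  set s := ∑ i, x i with hsdef
  have hmem : (s⁻¹ • x) ∈ stdSimplex' m := by
    constructor
    · intro i
      exact mul_nonneg (inv_nonneg.mpr hs.le) (hx i)
    · show ∑ i, s⁻¹ * x i = 1
      rw [← Finset.mul_sum, ← hsdef, inv_mul_cancel₀ hs.ne']
  refine ⟨hmem, ?_⟩
  rw [smul_dotProduct, Matrix.mulVec_smul, dotProduct_smul]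
  field_simp
  simp only [smul_eq_mul]
  rw [one_div, ← mul_assoc, ← mul_assoc, sq, mul_assoc s s s⁻¹, mul_inv_cancel₀ hs.ne', mul_one,
    mul_inv_cancel₀ hs.ne', one_mul]

lemma gaddumAux_copositive_iff (B : Matrix (Fin m) (Fin m) ℝ) :
    copositive B ↔ ∀ x ∈ stdSimplex' m, 0 ≤ x ⬝ᵥ B *ᵥ x := by
  constructor
  · exact fun h x hx => h x hx.1
  · intro h x hx
    rcases eq_or_lt_of_le (Finset.sum_nonneg (fun i _ => hx i)) with hs | hs
    · have hx0 : x = 0 := funext fun i =>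
        (Finset.sum_eq_zero_iff_of_nonneg (fun i _ => hx i)).mp hs.symm i (Finset.mem_univ i)
      rw [hx0]; simp
    · obtain ⟨hmem, heq⟩ := gaddumAux_scale_aux (B := B) hx hs
      rw [heq]
      exact mul_nonneg (sq_nonneg _) (h _ hmem)

lemma gaddumAux_strictCopositive_iff (B : Matrix (Fin m) (Fin m) ℝ) :
    strictCopositive B ↔ ∀ x ∈ stdSimplex' m, 0 < x ⬝ᵥ B *ᵥ x := by
  constructor
  · intro h x hx
    refine h x hx.1 fun h0 => ?_
    rw [h0] at hx
    simpa using hx.2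
  · intro h x hx hx0
    have hs : 0 < ∑ i, x i := by
      rcases eq_or_lt_of_le (Finset.sum_nonneg (fun i _ => hx i)) with hs | hs
      · exact absurd (funext fun i =>
          (Finset.sum_eq_zero_iff_of_nonneg (fun i _ => hx i)).mp hs.symm i (Finset.mem_univ i)) hx0
      · exact hs
    obtain ⟨hmem, heq⟩ := gaddumAux_scale_aux (B := B) hx hs
    rw [heq]
    exact mul_pos (pow_pos hs 2) (h _ hmem)

lemma gaddumAux_vecMul_eq {B : Matrix (Fin m) (Fin m) ℝ} (hB : B.IsSymm) (x : Fin m → ℝ) :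
    x ᵥ* B = B *ᵥ x := by rw [← Matrix.mulVec_transpose, hB.eq]

lemma gaddumAux_mem_ne_zero {x : Fin m → ℝ} (hx : x ∈ stdSimplex' m) : x ≠ 0 := by
  intro h
  rw [h] at hx
  simpa using hx.2

lemma gaddumAux_restrict_sum {k : Fin (m+1)} {x : Fin (m+1) → ℝ} (hx : x ∈ stdSimplex' (m+1))
    (hk : x k = 0) : ∑ j, x (k.succAbove j) = 1 := by
  have := hx.2
  rw [Fin.sum_univ_succAbove _ k, hk, zero_add] at this
  exact this

theorem gaddum_characterization {n : ℕ}
    (B : Matrix (Fin (n + 1)) (Fin (n + 1)) ℝ) (hB : B.IsSymm) :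
    (copositive B ↔
      ((∀ k : Fin (n + 1), copositive (deleteRC B k)) ∧ 0 ≤ gameValue B)) ∧
    (strictCopositive B ↔
      ((∀ k : Fin (n + 1), strictCopositive (deleteRC B k)) ∧ 0 < gameValue B)) := by
  obtain ⟨x, hx, hmin⟩ := gaddumAux_exists_minimizer B
  have hqinf : x ⬝ᵥ B *ᵥ x ≤ Finset.univ.inf' Finset.univ_nonempty (x ᵥ* B) := by
    rw [gaddumAux_vecMul_eq hB]
    exact Finset.le_inf' _ _ (fun j _ => (gaddumAux_min_lemma hB hx hmin).1 j)
  have hgv_ge : x ⬝ᵥ B *ᵥ x ≤ gameValue B := le_trans hqinf (gaddumAux_le_gameValue B hx)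
  -- the reverse bound when x has full support
  have hrev : (∀ i, 0 < x i) → gameValue B ≤ x ⬝ᵥ B *ᵥ x := by
    intro hfull
    apply gaddumAux_gameValue_le
    intro w hw
    have h2 : w ⬝ᵥ (B *ᵥ x) = x ⬝ᵥ B *ᵥ x := by
      calc w ⬝ᵥ (B *ᵥ x) = ∑ i, w i * (B *ᵥ x) i := rfl
        _ = ∑ i, w i * (x ⬝ᵥ B *ᵥ x) :=
              Finset.sum_congr rfl fun i _ => by rw [(gaddumAux_min_lemma hB hx hmin).2 i (hfull i)]
        _ = x ⬝ᵥ B *ᵥ x := by rw [← Finset.sum_mul, hw.2, one_mul]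
    refine le_trans (gaddumAux_inf_dot_le hx) ?_
    rw [← Matrix.dotProduct_mulVec]
    exact le_of_eq h2
  constructor
  · constructor
    · intro hcop
      refine ⟨fun k z hz => ?_, ?_⟩
      · rw [← gaddumAux_ext_dot]
        exact hcop _ (gaddumAux_extZ_nonneg hz)
      · exact le_trans (hcop x hx.1) hgv_ge
    · rintro ⟨hsub, hval⟩
      rw [gaddumAux_copositive_iff]
      intro y hy
      refine le_trans ?_ (hmin y hy)
      by_contra hneg
      push_neg at hneg
      have hfull : ∀ i, 0 < x i := by
        intro i
        rcases (hx.1 i).eq_or_lt with h | h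
        · exfalso
          have hx' := gaddumAux_eq_extZ h.symm
          have := hsub i (fun j => x (i.succAbove j)) (fun j => hx.1 _)
          rw [← gaddumAux_ext_dot, ← hx'] at this
          linarith
        · exact h
      have := hrev hfull
      linarith
  · constructor
    · intro hcop
      refine ⟨fun k z hz hz0 => ?_, ?_⟩
      · rw [← gaddumAux_ext_dot]
        exact hcop _ (gaddumAux_extZ_nonneg hz) (gaddumAux_extZ_ne_zero hz0)
      · exact lt_of_lt_of_le (hcop x hx.1 (gaddumAux_mem_ne_zero hx)) hgv_ge
    · rintro ⟨hsub, hval⟩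
      rw [gaddumAux_strictCopositive_iff]
      intro y hy
      refine lt_of_lt_of_le ?_ (hmin y hy)
      by_contra hneg
      push_neg at hneg
      have hfull : ∀ i, 0 < x i := by
        intro i
        rcases (hx.1 i).eq_or_lt with h | h
        · exfalso
          have hx' := gaddumAux_eq_extZ h.symm
          have hzne : (fun j => x (i.succAbove j)) ≠ 0 := by
            intro h0
            have := gaddumAux_restrict_sum hx h.symm
            rw [show (fun j => x (i.succAbove j)) = 0 from h0] at this
            simpa using this
          have := hsub i (fun j => x (i.succAbove j)) (fun j => hx.1 _) hzne
          rw [← gaddumAux_ext_dot, ← hx'] at this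
          linarith
        · exact h
      have := hrev hfull
      linarith
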